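/- For every integer m ≥ 3, the super edge-magic deficiency of P_6 + K̄_m equals 2(m − 1). -/

import Mathlib

open SimpleGraph

/-- A super edge-magic labeling of `G` with magic constant `k`: a bijection from
vertices and edges onto `{1, …, p+q}` sending vertices onto `{1, …, p}`, with
`f x + f (xy) + f y = k` for every edge `xy`. -/
def IsSEMWith {V : Type*} [Fintype V] (G : SimpleGraph V) (k : ℕ) : Prop :=
  ∃ (f : V → ℕ) (g : G.edgeSet → ℕ),
    Function.Injective (Sum.elim f g) ∧
    Set.range (Sum.elim f g) = Set.Icc 1 (Fintype.card V + G.edgeSet.ncard) ∧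
    Set.range f = Set.Icc 1 (Fintype.card V) ∧
    ∀ (x y : V) (h : G.Adj x y), f x + g ⟨s(x, y), G.mem_edgeSet.mpr h⟩ + f y = k

/-- `G` is super edge-magic. -/
def IsSEM {V : Type*} [Fintype V] (G : SimpleGraph V) : Prop :=
  ∃ k : ℕ, IsSEMWith G k

/-- The graph `G ∪ t K₁`: `G` together with `t` added isolated vertices. -/
def unionIsolated {V : Type*} (G : SimpleGraph V) (t : ℕ) : SimpleGraph (V ⊕ Fin t) :=
  G.map Function.Embedding.inl

/-- The super edge-magic deficiency `μₛ(G)`: the least `t` such that `G ∪ t K₁`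
is super edge-magic, or `⊤` if there is no such `t`. -/
noncomputable def semDeficiency {V : Type*} [Fintype V] (G : SimpleGraph V) : ℕ∞ :=
  sInf ((fun t : ℕ => (t : ℕ∞)) '' {t : ℕ | IsSEM (unionIsolated G t)})

/-- `H n`: the wheel `W_n` (hub `0`, rim `1, …, n`) minus the spoke `{0, 1}`. -/
def wheelMinusSpoke (n : ℕ) : SimpleGraph (Fin (n + 1)) :=
  SimpleGraph.fromRel (fun i j =>
    ((i : ℕ) = 0 ∧ 2 ≤ (j : ℕ)) ∨
    ((j : ℕ) = (i : ℕ) + 1 ∧ 1 ≤ (i : ℕ)) ∨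
    ((i : ℕ) = n ∧ (j : ℕ) = 1))

/-- The join `P_n + K̄_m`: a path `u_1 … u_n` plus `m` vertices joined to every `u_i`. -/
def pathJoin (n m : ℕ) : SimpleGraph (Fin n ⊕ Fin m) :=
  SimpleGraph.fromRel (fun a b =>
    (∃ i j : Fin n, a = Sum.inl i ∧ b = Sum.inl j ∧ (j : ℕ) = (i : ℕ) + 1) ∨
    (∃ (i : Fin n) (j : Fin m), a = Sum.inl i ∧ b = Sum.inr j))

/-- The join `K_{1,n} + K̄_m`: a star with center `Sum.inl 0` and leaves
`Sum.inl i`, `i ≠ 0`, plus `m` vertices joined to all star vertices. -/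
def starJoin (n m : ℕ) : SimpleGraph (Fin (n + 1) ⊕ Fin m) :=
  SimpleGraph.fromRel (fun a b =>
    (∃ i : Fin (n + 1), a = Sum.inl 0 ∧ b = Sum.inl i ∧ i ≠ 0) ∨
    (∃ (i : Fin (n + 1)) (j : Fin m), a = Sum.inl i ∧ b = Sum.inr j))

/-- The join `C_n + K̄_m`: a cycle `u_1 … u_n` plus `m` vertices joined to every `u_i`. -/
def cycleJoin (n m : ℕ) : SimpleGraph (Fin n ⊕ Fin m) :=
  SimpleGraph.fromRel (fun a b =>
    (∃ i j : Fin n, a = Sum.inl i ∧ b = Sum.inl j ∧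
      ((j : ℕ) = (i : ℕ) + 1 ∨ ((i : ℕ) = n - 1 ∧ (j : ℕ) = 0))) ∨
    (∃ (i : Fin n) (j : Fin m), a = Sum.inl i ∧ b = Sum.inr j))

/-- The join `G + K̄_m`: `G` plus `m` new vertices joined to every vertex of `G`. -/
def joinIsolated {V : Type*} (G : SimpleGraph V) (m : ℕ) : SimpleGraph (V ⊕ Fin m) :=
  SimpleGraph.fromRel (fun a b =>
    (∃ x y : V, a = Sum.inl x ∧ b = Sum.inl y ∧ G.Adj x y) ∨
    (∃ (x : V) (j : Fin m), a = Sum.inl x ∧ b = Sum.inr j))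

/-!
In a super edge-magic labeling the label of an edge is the magic constant minus the sum of its end
labels, so the edge sums are distinct, and they lie in `[3, 2p - 1]`; hence `q ≤ 2p - 3`. For
`P₆ + K̄ₘ ∪ tK₁` we have `p = m + 6 + t` and `q = 6m + 5`, which forces `t ≥ 2(m - 1)`.
Conversely, a bijective vertex labeling onto `[1, p]` whose edge sums are `q` consecutive integers
extends to a super edge-magic labeling (label the edge with sum `σ` by `p + q + s - σ`), and the
labeling `semLabel` does this for `t = 2(m - 1)`.
-/

open SimpleGraph Sum

variable {V : Type*}

def edgeSum (f : V → ℕ) : Sym2 V → ℕ :=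
  Sym2.lift ⟨fun a b => f a + f b, fun _ _ => add_comm _ _⟩

@[simp]
lemma edgeSum_mk (f : V → ℕ) (a b : V) : edgeSum f s(a, b) = f a + f b := rfl

section SuperEdgeMagic

variable [Fintype V] {G : SimpleGraph V}

lemma IsSEMWith.ncard_edgeSet_le {k : ℕ} (h : IsSEMWith G k) :
    G.edgeSet.ncard ≤ 2 * Fintype.card V - 3 := by
  obtain ⟨f, g, hinj, -, hf, hk⟩ := h
  have hf_mem (x : V) : f x ∈ Set.Icc 1 (Fintype.card V) := hf ▸ Set.mem_range_self x
  have hmagic (e : Sym2 V) (he : e ∈ G.edgeSet) : g ⟨e, he⟩ + edgeSum f e = k := by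
    induction e using Sym2.ind with
    | _ x y => have := hk x y he; simp only [edgeSum_mk]; omega
  have hbound (e : Sym2 V) (he : e ∈ G.edgeSet) :
      edgeSum f e ∈ Set.Icc 3 (2 * Fintype.card V - 1) := by
    induction e using Sym2.ind with
    | _ x y =>
      have hne : f x ≠ f y := fun hxy => G.ne_of_adj he (hinj.comp inl_injective hxy)
      have := hf_mem x; have := hf_mem y
      simp only [edgeSum_mk, Set.mem_Icc] at *
      omega
  -- The magic condition turns the injectivity of the edge labels into that of the edge sums.
  have hinjOn : Set.InjOn (edgeSum f) G.edgeSet := fun e he e' he' hee' => by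
    have := hmagic e he; have := hmagic e' he'
    have hg : g ⟨e, he⟩ = g ⟨e', he'⟩ := by omega
    exact congrArg Subtype.val (hinj.comp inr_injective hg)
  calc G.edgeSet.ncard ≤ (Set.Icc 3 (2 * Fintype.card V - 1)).ncard :=
        Set.ncard_le_ncard_of_injOn _ hbound hinjOn (Set.finite_Icc _ _)
    _ = 2 * Fintype.card V - 3 := by rw [Set.ncard_Icc_nat]; omega

lemma IsSEM.ncard_edgeSet_le (h : IsSEM G) : G.edgeSet.ncard ≤ 2 * Fintype.card V - 3 :=
  h.elim fun _ hk => hk.ncard_edgeSet_le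

lemma isSEMWith_of_range_edgeSum {f : V → ℕ} {s : ℕ}
    (hf : Set.range f = Set.Icc 1 (Fintype.card V))
    (hs : edgeSum f '' G.edgeSet = Set.Ico s (s + G.edgeSet.ncard)) :
    IsSEMWith G (Fintype.card V + G.edgeSet.ncard + s) := by
  set p := Fintype.card V
  set q := G.edgeSet.ncard
  have hf_inj : Function.Injective f := by
    rw [← Set.injOn_univ]
    refine Set.injOn_of_ncard_image_eq ?_
    rw [Set.image_univ, hf, Set.ncard_Icc_nat, Set.ncard_univ, Nat.card_eq_fintype_card]
    omega
  have hs_inj : Set.InjOn (edgeSum f) G.edgeSet :=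
    Set.injOn_of_ncard_image_eq (by rw [hs, Set.ncard_Ico_nat]; omega)
  have hs_mem (e : G.edgeSet) : edgeSum f e ∈ Set.Ico s (s + q) :=
    hs ▸ Set.mem_image_of_mem _ e.2
  let g : G.edgeSet → ℕ := fun e => p + q + s - edgeSum f e
  have hg_range : Set.range g = Set.Icc (p + 1) (p + q) := by
    ext n
    simp only [Set.mem_range, Set.mem_Icc]
    constructor
    · rintro ⟨e, rfl⟩
      have := hs_mem e
      simp only [Set.mem_Ico, g] at this ⊢
      omega
    · rintro ⟨hn₁, hn₂⟩
      obtain ⟨e, he, hen⟩ : p + q + s - n ∈ edgeSum f '' G.edgeSet := by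
        rw [hs, Set.mem_Ico]
        omega
      exact ⟨⟨e, he⟩, show p + q + s - edgeSum f e = n by omega⟩
  have hg_inj : Function.Injective g := fun e e' hee' => by
    have := hs_mem e; have := hs_mem e'
    simp only [Set.mem_Ico, g] at *
    exact Subtype.ext (hs_inj e.2 e'.2 (by omega))
  refine ⟨f, g, hf_inj.sumElim hg_inj fun x e => ?_, ?_, hf, fun x y hxy => ?_⟩
  · have hx : f x ∈ Set.Icc 1 p := hf ▸ Set.mem_range_self x
    have he : g e ∈ Set.Icc (p + 1) (p + q) := hg_range ▸ Set.mem_range_self e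
    simp only [Set.mem_Icc] at hx he
    omega
  · ext n
    simp only [Set.Sum.elim_range, hf, hg_range, Set.mem_union, Set.mem_Icc]
    omega
  · have := hs_mem ⟨_, G.mem_edgeSet.mpr hxy⟩
    simp only [Set.mem_Ico, g, edgeSum_mk] at *
    omega

end SuperEdgeMagic

section Deficiency

variable (G : SimpleGraph V)

lemma edgeSet_unionIsolated (t : ℕ) :
    (unionIsolated G t).edgeSet = Function.Embedding.inl.sym2Map '' G.edgeSet :=
  edgeSet_map _ _

lemma ncard_edgeSet_unionIsolated (t : ℕ) :
    (unionIsolated G t).edgeSet.ncard = G.edgeSet.ncard := by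
  rw [edgeSet_unionIsolated,
    Set.ncard_image_of_injective _ (Function.Embedding.sym2Map _).injective]

lemma edgeSum_image_edgeSet_unionIsolated {t : ℕ} (f : V ⊕ Fin t → ℕ) :
    edgeSum f '' (unionIsolated G t).edgeSet = edgeSum (f ∘ inl) '' G.edgeSet := by
  rw [edgeSet_unionIsolated, Set.image_image]
  congr 1
  funext e
  induction e using Sym2.ind with
  | _ x y => rfl

lemma ncard_edgeSet_le_of_isSEM_unionIsolated [Fintype V] {t : ℕ}
    (h : IsSEM (unionIsolated G t)) :
    G.edgeSet.ncard ≤ 2 * (Fintype.card V + t) - 3 := by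
  simpa [ncard_edgeSet_unionIsolated] using h.ncard_edgeSet_le

lemma semDeficiency_eq [Fintype V] {t : ℕ} (h : IsSEM (unionIsolated G t))
    (hmin : ∀ t', IsSEM (unionIsolated G t') → t ≤ t') : semDeficiency G = t := by
  refine le_antisymm (sInf_le ⟨t, h, rfl⟩) (le_sInf ?_)
  rintro _ ⟨t', ht', rfl⟩
  exact Nat.cast_le.mpr (hmin t' ht')

end Deficiency

section PathJoin

variable (n m : ℕ)

lemma pathJoin_adj_inl_inl {i j : Fin n} (h : (j : ℕ) = i + 1) :
    (pathJoin n m).Adj (inl i) (inl j) := by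
  refine (fromRel_adj _ _ _).mpr ⟨fun hij => ?_, .inl (.inl ⟨i, j, rfl, rfl, h⟩)⟩
  rw [inl.injEq] at hij
  omega

lemma pathJoin_adj_inl_inr (i : Fin n) (j : Fin m) : (pathJoin n m).Adj (inl i) (inr j) :=
  (fromRel_adj _ _ _).mpr ⟨inl_ne_inr, .inl (.inr ⟨i, j, rfl, rfl⟩)⟩

def pathJoinEdge : Fin n ⊕ Fin (n + 1) × Fin m → Sym2 (Fin (n + 1) ⊕ Fin m)
  | inl i => s(inl i.castSucc, inl i.succ)
  | inr (i, j) => s(inl i, inr j)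

lemma pathJoinEdge_injective : Function.Injective (pathJoinEdge n m) := by
  rintro (i | ⟨i, j⟩) (i' | ⟨i', j'⟩) h <;>
    simp only [pathJoinEdge, Sym2.eq_iff, inl.injEq, inr.injEq, reduceCtorEq, and_false,
      false_and, or_false, or_self, Prod.mk.injEq, Fin.ext_iff, Fin.val_castSucc, Fin.val_succ]
      at h ⊢
  all_goals omega

lemma range_pathJoinEdge : Set.range (pathJoinEdge n m) = (pathJoin (n + 1) m).edgeSet := by
  ext e
  induction e using Sym2.ind with
  | _ x y =>
    constructor
    · rintro ⟨i | ⟨i, j⟩, he⟩ <;> rw [← he]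
      · exact pathJoin_adj_inl_inl _ _ (Fin.val_succ i)
      · exact pathJoin_adj_inl_inr _ _ i j
    · have path_edge (i j : Fin (n + 1)) (hij : (j : ℕ) = i + 1) :
          s(inl i, inl j) ∈ Set.range (pathJoinEdge n m) :=
        ⟨inl ⟨i, by omega⟩, by simp [pathJoinEdge, Fin.ext_iff, hij]⟩
      rw [mem_edgeSet, pathJoin, fromRel_adj]
      rintro ⟨-, (⟨i, j, rfl, rfl, hij⟩ | ⟨i, j, rfl, rfl⟩) |
        (⟨i, j, rfl, rfl, hij⟩ | ⟨i, j, rfl, rfl⟩)⟩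
      · exact path_edge i j hij
      · exact ⟨inr (i, j), rfl⟩
      · exact Sym2.eq_swap ▸ path_edge i j hij
      · exact ⟨inr (i, j), Sym2.eq_swap⟩

lemma ncard_edgeSet_pathJoin : (pathJoin (n + 1) m).edgeSet.ncard = n + (n + 1) * m := by
  rw [← range_pathJoinEdge, Set.ncard_range_of_injective (pathJoinEdge_injective n m)]
  simp

lemma edgeSum_image_edgeSet_pathJoin (f : Fin (n + 1) ⊕ Fin m → ℕ) :
    edgeSum f '' (pathJoin (n + 1) m).edgeSet =
      Set.range (fun i : Fin n => f (inl i.castSucc) + f (inl i.succ)) ∪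
        Set.image2 (· + ·) (Set.range (f ∘ inl)) (Set.range (f ∘ inr)) := by
  rw [← range_pathJoinEdge, ← Set.range_comp, Set.image2_range, ← Set.Sum.elim_range]
  congr 1
  funext e
  rcases e with i | ⟨i, j⟩ <;> rfl

end PathJoin

section Labeling

variable {m : ℕ}

def pathLabel (m : ℕ) : Fin 6 → ℕ := ![2, 1, 3, 3 * m + 2, 3 * m + 4, 3 * m + 3]

-- The `v_j` take the labels `≡ 1 (mod 3)` of `[4, 3m + 1]` and the isolated vertices the other
-- labels of `[5, 3m]`. The sums `u_i + v_j` then fill `[5, 3m + 4]` and `[3m + 6, 6m + 5]`, and the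
-- path edges contribute `3, 4, 3m + 5, 6m + 6, 6m + 7`.
def semLabel (m : ℕ) : (Fin 6 ⊕ Fin m) ⊕ Fin (2 * (m - 1)) → ℕ :=
  Sum.elim (Sum.elim (pathLabel m) fun j => 3 * j + 4) fun s => 3 * (s / 2) + 5 + s % 2

lemma range_pathLabel :
    Set.range (pathLabel m) = Set.Icc 1 3 ∪ Set.Icc (3 * m + 2) (3 * m + 4) := by
  ext n
  simp only [pathLabel, Matrix.range_cons, Matrix.range_empty, Set.union_empty, Set.mem_union,
    Set.mem_singleton_iff, Set.mem_Icc]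
  omega

lemma range_semLabel : Set.range (semLabel m) = Set.Icc 1 (3 * m + 4) := by
  ext n
  simp only [semLabel, Set.Sum.elim_range, range_pathLabel, Set.mem_union, Set.mem_range,
    Set.mem_Icc]
  constructor
  · rintro (((h | h) | ⟨j, rfl⟩) | ⟨s, rfl⟩) <;> omega
  · rintro ⟨h1, h2⟩
    by_cases hpath : n ≤ 3 ∨ 3 * m + 2 ≤ n
    · omega
    by_cases hjoin : n % 3 = 1
    · exact .inl (.inr ⟨⟨(n - 4) / 3, by omega⟩, by dsimp only; omega⟩)
    · exact .inr ⟨⟨2 * ((n - 5) / 3) + (n - 5) % 3, by omega⟩, by dsimp only; omega⟩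

lemma edgeSum_image_semLabel :
    edgeSum (semLabel m) '' (unionIsolated (pathJoin 6 m) (2 * (m - 1))).edgeSet =
      Set.Ico 3 (6 * m + 8) := by
  have hpath : (semLabel m ∘ inl) ∘ inl = pathLabel m := rfl
  rw [edgeSum_image_edgeSet_unionIsolated, edgeSum_image_edgeSet_pathJoin 5 m, hpath,
    range_pathLabel]
  ext n
  simp only [Set.mem_union, Set.mem_range, Fin.exists_fin_succ, Set.mem_Ico, Set.mem_image2,
    Set.mem_Icc, pathLabel, semLabel, Matrix.cons_val, Fin.reduceCastSucc, Fin.reduceSucc,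
    IsEmpty.exists_iff, or_false, Function.comp_apply, elim_inl, elim_inr, exists_exists_eq_and]
  constructor
  · rintro (h | ⟨a, ha, _, ⟨j, rfl⟩, rfl⟩) <;> omega
  · rintro ⟨h1, h2⟩
    by_cases hpath : n ≤ 4 ∨ n = 3 * m + 5 ∨ 6 * m + 6 ≤ n
    · omega
    refine .inr ?_
    by_cases hsmall : n ≤ 3 * m + 4
    · exact ⟨(n - 5) % 3 + 1, by omega, ⟨(n - 5) / 3, by omega⟩, by dsimp only; omega⟩
    · exact ⟨3 * m + 2 + (n - 3 * m - 6) % 3, by omega, ⟨(n - 3 * m - 6) / 3, by omega⟩,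
        by dsimp only; omega⟩

end Labeling

section PathJoinSix

variable {m : ℕ}

lemma ncard_edgeSet_pathJoin_six : (pathJoin 6 m).edgeSet.ncard = 6 * m + 5 :=
  (ncard_edgeSet_pathJoin 5 m).trans (by ring)

lemma isSEM_unionIsolated_pathJoin_six (hm : 1 ≤ m) :
    IsSEM (unionIsolated (pathJoin 6 m) (2 * (m - 1))) := by
  refine ⟨_, isSEMWith_of_range_edgeSum (f := semLabel m) (s := 3) ?_ ?_⟩
  · rw [range_semLabel, Fintype.card_sum, Fintype.card_sum, Fintype.card_fin, Fintype.card_fin,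
      Fintype.card_fin]
    congr 1
    omega
  · rw [edgeSum_image_semLabel, ncard_edgeSet_unionIsolated, ncard_edgeSet_pathJoin_six]
    congr 1
    omega

lemma two_mul_pred_le_of_isSEM_unionIsolated_pathJoin_six {t : ℕ}
    (h : IsSEM (unionIsolated (pathJoin 6 m) t)) : 2 * (m - 1) ≤ t := by
  have := ncard_edgeSet_le_of_isSEM_unionIsolated _ h
  rw [ncard_edgeSet_pathJoin_six, Fintype.card_sum, Fintype.card_fin, Fintype.card_fin] at this
  omega

end PathJoinSix

/-- for every `m ≥ 3`, `μₛ(P₆ + K̄_m) = 2(m − 1)`. -/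
theorem stmt12 (m : ℕ) (hm : 3 ≤ m) :
    semDeficiency (pathJoin 6 m) = ((2 * (m - 1) : ℕ) : ℕ∞) :=
  semDeficiency_eq _ (isSEM_unionIsolated_pathJoin_six (by omega)) fun _ =>
    two_mul_pred_le_of_isSEM_unionIsolated_pathJoin_six
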